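/- Let W ~ Poisson(λ) with λ > 0, and let f: ℕ → ℝ be 1-Lipschitz in the sense that |f(w+1) − f(w)| ≤ 1 for all w ∈ ℕ. Then for every t > 0: P[ f(W) − E[f(W)] > t ] ≤ exp( −t² / (16λ + 3t) ). -/

import Mathlib

open Real BigOperators Finset
open scoped Classical
noncomputable section
def poissonP (lam : ℝ) (n : ℕ) : ℝ := Real.exp (-lam) * lam ^ n / n.factorial

lemma exp_tsum (x : ℝ) : Real.exp x = ∑' n : ℕ, x ^ n / n.factorial := by
  rw [Real.exp_eq_exp_ℝ, NormedSpace.exp_eq_tsum_div]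

lemma mgf_summable (lam r : ℝ) : Summable (fun n => poissonP lam n * r ^ n) := by
  have h := (Real.summable_pow_div_factorial (lam * r)).mul_left (Real.exp (-lam))
  refine h.congr fun n => ?_
  simp [poissonP, mul_pow]
  ring

lemma mgf_eq (lam r : ℝ) : (∑' n : ℕ, poissonP lam n * r ^ n) = Real.exp (lam * (r - 1)) := by
  have : (∑' n : ℕ, poissonP lam n * r ^ n)
      = Real.exp (-lam) * ∑' n : ℕ, (lam * r) ^ n / n.factorial := by
    rw [← tsum_mul_left]
    refine tsum_congr fun n => ?_
    simp [poissonP, mul_pow]; ring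
  rw [this, ← exp_tsum, ← Real.exp_add]
  ring_nf

lemma poissonP_nonneg {lam : ℝ} (h : 0 ≤ lam) (n : ℕ) : 0 ≤ poissonP lam n := by
  unfold poissonP
  positivity

lemma poissonP_summable (lam : ℝ) : Summable (poissonP lam) := by
  have := mgf_summable lam 1
  simpa using this

lemma poissonP_tsum (lam : ℝ) : (∑' n : ℕ, poissonP lam n) = 1 := by
  have := mgf_eq lam 1
  simpa using this

lemma poissonP_succ (lam : ℝ) (n : ℕ) :
    poissonP lam (n+1) * (n+1 : ℝ) = lam * poissonP lam n := by
  unfold poissonP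
  rw [Nat.factorial_succ]
  push_cast
  field_simp
  ring

-- summable p n * n
lemma summable_mul_nat (lam : ℝ) (hlam : 0 < lam) :
    Summable (fun n => poissonP lam n * n) := by
  rw [← summable_nat_add_iff 1]
  refine ((Real.summable_pow_div_factorial lam).mul_left (lam * Real.exp (-lam))).congr fun n => ?_
  push_cast
  rw [poissonP_succ lam n]
  unfold poissonP
  ring

lemma tsum_mul_nat (lam : ℝ) (hlam : 0 < lam) :
    (∑' n : ℕ, poissonP lam n * n) = lam := by
  rw [Summable.tsum_eq_zero_add (summable_mul_nat lam hlam)]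
  have h1 : ∀ n : ℕ, poissonP lam (n+1) * ((n+1 : ℕ) : ℝ) = lam * poissonP lam n := by
    intro n; push_cast; exact poissonP_succ lam n
  simp only [h1]
  rw [tsum_mul_left]
  have : (∑' n : ℕ, poissonP lam n) = 1 := by
    have := mgf_eq lam 1; simpa using this
  simp [this]

lemma summable_mul_nat2 (lam : ℝ) (hlam : 0 < lam) :
    Summable (fun n => poissonP lam n * n * ((n:ℝ) - 1)) := by
  rw [← summable_nat_add_iff 1]
  refine (((summable_mul_nat lam hlam).mul_left lam)).congr fun n => ?_
  have h1 : poissonP lam (n+1) * ((n+1 : ℕ) : ℝ) = lam * poissonP lam n := by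
    push_cast; exact poissonP_succ lam n
  push_cast
  rw [show poissonP lam (n+1) * ((n:ℝ)+1) * ((n:ℝ)+1-1)
      = (poissonP lam (n+1) * ((n:ℝ)+1)) * (n:ℝ) by ring,
    show poissonP lam (n+1) * ((n:ℝ)+1) = lam * poissonP lam n from by exact_mod_cast h1]
  ring

lemma tsum_mul_nat2 (lam : ℝ) (hlam : 0 < lam) :
    (∑' n : ℕ, poissonP lam n * n * ((n:ℝ) - 1)) = lam ^ 2 := by
  rw [Summable.tsum_eq_zero_add (summable_mul_nat2 lam hlam)]
  have h1 : ∀ n : ℕ, poissonP lam (n+1) * (((n:ℕ)+1 : ℕ) : ℝ) * (((n:ℕ)+1 : ℕ) - 1 : ℝ)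
      = lam * (poissonP lam n * n) := by
    intro n
    have h2 : poissonP lam (n+1) * ((n+1 : ℕ) : ℝ) = lam * poissonP lam n := by
      push_cast; exact poissonP_succ lam n
    push_cast at h2 ⊢
    rw [show poissonP lam (n+1) * ((n:ℝ)+1) * ((n:ℝ)+1-1)
        = (poissonP lam (n+1) * ((n:ℝ)+1)) * (n:ℝ) by ring, h2]
    ring
  push_cast at h1 ⊢
  simp only [h1]
  rw [tsum_mul_left, tsum_mul_nat lam hlam]
  simp
  ring

lemma summable_sq (lam : ℝ) (hlam : 0 < lam) :
    Summable (fun n => poissonP lam n * ((n:ℝ) - lam)^2) := by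
  have h := ((summable_mul_nat2 lam hlam).add
    (((summable_mul_nat lam hlam).mul_left (1 - 2*lam)).add
      ((poissonP_summable lam).mul_left (lam^2))))
  refine h.congr fun n => ?_
  ring

lemma tsum_sq (lam : ℝ) (hlam : 0 < lam) :
    (∑' n : ℕ, poissonP lam n * ((n:ℝ) - lam)^2) = lam := by
  have hcong : ∀ n : ℕ, poissonP lam n * ((n:ℝ) - lam)^2
      = poissonP lam n * n * ((n:ℝ) - 1) + ((1 - 2*lam) * (poissonP lam n * n)
        + lam^2 * poissonP lam n) := by
    intro n; ring
  rw [tsum_congr hcong,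
    Summable.tsum_add (summable_mul_nat2 lam hlam)
      (((summable_mul_nat lam hlam).mul_left (1 - 2*lam)).add
        ((poissonP_summable lam).mul_left (lam^2))),
    Summable.tsum_add ((summable_mul_nat lam hlam).mul_left (1 - 2*lam))
      ((poissonP_summable lam).mul_left (lam^2)),
    tsum_mul_left, tsum_mul_left, tsum_mul_nat lam hlam, tsum_mul_nat2 lam hlam,
    poissonP_tsum lam]
  ring

lemma summable_abs' (lam : ℝ) (hlam : 0 < lam) :
    Summable (fun n => poissonP lam n * |(n:ℝ) - lam|) := by
  refine Summable.of_nonneg_of_le (fun n => mul_nonneg (poissonP_nonneg hlam.le n) (abs_nonneg _))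
    (fun n => ?_) ((summable_sq lam hlam).add ((poissonP_summable lam).mul_left 1))
  have h1 : |(n:ℝ) - lam| ≤ ((n:ℝ) - lam)^2 + 1 := by nlinarith [abs_nonneg ((n:ℝ)-lam), sq_abs ((n:ℝ)-lam)]
  have h2 := poissonP_nonneg hlam.le n
  calc poissonP lam n * |(n:ℝ) - lam| ≤ poissonP lam n * (((n:ℝ) - lam)^2 + 1) := by
        exact mul_le_mul_of_nonneg_left h1 h2
    _ = poissonP lam n * ((n:ℝ) - lam)^2 + 1 * poissonP lam n := by ring

lemma tsum_abs_le (lam : ℝ) (hlam : 0 < lam) :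
    (∑' n : ℕ, poissonP lam n * |(n:ℝ) - lam|) ≤ Real.sqrt lam := by
  have hs : 0 < Real.sqrt lam := Real.sqrt_pos.mpr hlam
  have hpt : ∀ n : ℕ, poissonP lam n * |(n:ℝ) - lam|
      ≤ (1/(2*Real.sqrt lam)) * (poissonP lam n * ((n:ℝ) - lam)^2 + lam * poissonP lam n) := by
    intro n
    have h2 := poissonP_nonneg hlam.le n
    have key : |(n:ℝ) - lam| ≤ (((n:ℝ) - lam)^2 + lam) / (2 * Real.sqrt lam) := by
      rw [le_div_iff₀ (by positivity)]
      have hsq : Real.sqrt lam ^ 2 = lam := Real.sq_sqrt hlam.le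
      nlinarith [sq_nonneg (|(n:ℝ) - lam| - Real.sqrt lam), sq_abs ((n:ℝ)-lam)]
    calc poissonP lam n * |(n:ℝ) - lam|
        ≤ poissonP lam n * ((((n:ℝ) - lam)^2 + lam) / (2 * Real.sqrt lam)) :=
          mul_le_mul_of_nonneg_left key h2
      _ = (1/(2*Real.sqrt lam)) * (poissonP lam n * ((n:ℝ) - lam)^2 + lam * poissonP lam n) := by
          field_simp
  have hsum2 : Summable (fun n => (1/(2*Real.sqrt lam)) *
      (poissonP lam n * ((n:ℝ) - lam)^2 + lam * poissonP lam n)) :=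
    (((summable_sq lam hlam).add ((poissonP_summable lam).mul_left lam)).mul_left _)
  have := Summable.tsum_le_tsum hpt (summable_abs' lam hlam) hsum2
  refine this.trans ?_
  rw [tsum_mul_left, Summable.tsum_add (summable_sq lam hlam) ((poissonP_summable lam).mul_left lam),
    tsum_mul_left, tsum_sq lam hlam, poissonP_tsum lam]
  have hsq : Real.sqrt lam * Real.sqrt lam = lam := Real.mul_self_sqrt hlam.le
  rw [mul_one]
  rw [show lam + lam = 2 * lam by ring]
  rw [div_mul_eq_mul_div, one_mul, div_le_iff₀ (by positivity)]
  nlinarith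

lemma lip_bound (f : ℕ → ℝ) (hf : ∀ w : ℕ, |f (w + 1) - f w| ≤ 1) :
    ∀ n m : ℕ, |f n - f m| ≤ |(n:ℝ) - m| := by
  have key : ∀ m k : ℕ, |f (m + k) - f m| ≤ k := by
    intro m k
    induction k with
    | zero => simp
    | succ k ih =>
      have := hf (m + k)
      calc |f (m + (k+1)) - f m| = |(f (m + k + 1) - f (m+k)) + (f (m + k) - f m)| := by
            ring_nf
      _ ≤ |f (m + k + 1) - f (m+k)| + |f (m + k) - f m| := abs_add_le _ _
      _ ≤ 1 + k := add_le_add this ih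
      _ = ((k+1 : ℕ) : ℝ) := by push_cast; ring
  intro n m
  rcases le_total m n with h | h
  · obtain ⟨k, rfl⟩ := Nat.exists_eq_add_of_le h
    calc |f (m + k) - f m| ≤ k := key m k
      _ = |((m + k : ℕ) : ℝ) - m| := by
            push_cast
            rw [show ((m:ℝ) + k) - m = (k:ℝ) by ring, abs_of_nonneg (Nat.cast_nonneg k)]
  · obtain ⟨k, rfl⟩ := Nat.exists_eq_add_of_le h
    rw [abs_sub_comm]
    calc |f (n + k) - f n| ≤ k := key n k
      _ = |((n:ℝ)) - ((n + k : ℕ) : ℝ)| := by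
            push_cast
            rw [abs_sub_comm, show ((n:ℝ) + k) - n = (k:ℝ) by ring, abs_of_nonneg (Nat.cast_nonneg k)]

lemma indicator_le_exp {lam : ℝ} (hlam : 0 < lam) {A : Set ℕ} {c : ℝ} {n : ℕ}
    (hg : n ∈ A → (1:ℝ) ≤ c) (hg0 : 0 ≤ c) :
    A.indicator (poissonP lam) n ≤ poissonP lam n * c := by
  by_cases hn : n ∈ A
  · rw [Set.indicator_of_mem hn]
    have := poissonP_nonneg hlam.le n
    nlinarith [hg hn]
  · rw [Set.indicator_of_notMem hn]
    exact mul_nonneg (poissonP_nonneg hlam.le n) hg0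

lemma summable_indicator {lam : ℝ} (hlam : 0 < lam) (A : Set ℕ) :
    Summable (A.indicator (poissonP lam)) := by
  refine Summable.of_nonneg_of_le (fun n => Set.indicator_nonneg
    (fun m _ => poissonP_nonneg hlam.le m) n) (fun n => ?_) (poissonP_summable lam)
  exact Set.indicator_le_self' (fun m _ => poissonP_nonneg hlam.le m) n

lemma chernoff_upper (lam : ℝ) (hlam : 0 < lam) (a s : ℝ) (hs : 0 ≤ s) :
    (∑' n : ℕ, ({n : ℕ | a < (n:ℝ)}.indicator (poissonP lam)) n)
      ≤ Real.exp (lam * (Real.exp s - 1) - s * a) := by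
  have hpt : ∀ n : ℕ, ({n : ℕ | a < (n:ℝ)}.indicator (poissonP lam)) n
      ≤ (poissonP lam n * (Real.exp s) ^ n) * Real.exp (-(s*a)) := by
    intro n
    have key : (poissonP lam n * (Real.exp s) ^ n) * Real.exp (-(s*a))
        = poissonP lam n * Real.exp (s * (n:ℝ) - s*a) := by
      rw [show s * (n:ℝ) - s*a = (n:ℝ)*s + (-(s*a)) by ring, Real.exp_add,
        Real.exp_nat_mul]
      ring
    rw [key]
    refine indicator_le_exp hlam (fun hm => ?_) (Real.exp_nonneg _)
    refine Real.one_le_exp ?_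
    have : a < (n:ℝ) := hm
    nlinarith
  have hsum : Summable (fun n => (poissonP lam n * (Real.exp s) ^ n) * Real.exp (-(s*a))) :=
    (mgf_summable lam (Real.exp s)).mul_right _
  have := Summable.tsum_le_tsum hpt (summable_indicator hlam _) hsum
  refine this.trans ?_
  rw [tsum_mul_right, mgf_eq lam (Real.exp s), ← Real.exp_add]
  apply le_of_eq
  ring_nf

lemma chernoff_lower (lam : ℝ) (hlam : 0 < lam) (a s : ℝ) (hs : 0 ≤ s) :
    (∑' n : ℕ, ({n : ℕ | (n:ℝ) < a}.indicator (poissonP lam)) n)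
      ≤ Real.exp (lam * (Real.exp (-s) - 1) + s * a) := by
  have hpt : ∀ n : ℕ, ({n : ℕ | (n:ℝ) < a}.indicator (poissonP lam)) n
      ≤ (poissonP lam n * (Real.exp (-s)) ^ n) * Real.exp (s*a) := by
    intro n
    have key : (poissonP lam n * (Real.exp (-s)) ^ n) * Real.exp (s*a)
        = poissonP lam n * Real.exp (s*a - s * (n:ℝ)) := by
      rw [show s*a - s*(n:ℝ) = (n:ℝ)*(-s) + (s*a) by ring, Real.exp_add,
        Real.exp_nat_mul]
      ring
    rw [key]
    refine indicator_le_exp hlam (fun hm => ?_) (Real.exp_nonneg _)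
    refine Real.one_le_exp ?_
    have : (n:ℝ) < a := hm
    nlinarith
  have hsum : Summable (fun n => (poissonP lam n * (Real.exp (-s)) ^ n) * Real.exp (s*a)) :=
    (mgf_summable lam (Real.exp (-s))).mul_right _
  have := Summable.tsum_le_tsum hpt (summable_indicator hlam _) hsum
  refine this.trans ?_
  rw [tsum_mul_right, mgf_eq lam (Real.exp (-s)), ← Real.exp_add]

lemma exp_half_le : Real.exp (1/2) ≤ 53/32 := by
  have h : Real.exp (1/2) ^ 2 = Real.exp 1 := by
    rw [← Real.exp_nat_mul]; norm_num
  have h1 := Real.exp_one_lt_d9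
  nlinarith [Real.exp_pos (1/2)]

lemma exp_94_le : Real.exp (9/4) ≤ 10 := by
  have h : Real.exp (9/4) ^ 4 = Real.exp 9 := by
    rw [← Real.exp_nat_mul]; norm_num
  have h9 : Real.exp 9 = Real.exp 1 ^ 9 := by
    rw [← Real.exp_nat_mul]; norm_num
  have h1 : Real.exp 1 ^ 9 < 2.7182818286 ^ 9 :=
    pow_lt_pow_left₀ Real.exp_one_lt_d9 (Real.exp_pos 1).le (by norm_num)
  have h2 : (2.7182818286:ℝ) ^ 9 < 10000 := by norm_num
  nlinarith [Real.exp_pos (9/4), sq_nonneg (Real.exp (9/4) ^ 2 - 100),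
    sq_nonneg (Real.exp (9/4) - 10), sq_nonneg (Real.exp (9/4) + 10)]

lemma chord_exp {y : ℝ} (h0 : 0 ≤ y) (h1 : y ≤ 9/4) : Real.exp y ≤ 1 + 4*y := by
  have hc := convexOn_exp.2 (Set.mem_univ (0:ℝ)) (Set.mem_univ (9/4 : ℝ))
    (show (0:ℝ) ≤ 1 - 4*y/9 by linarith) (show (0:ℝ) ≤ 4*y/9 by linarith)
    (show (1 - 4*y/9) + 4*y/9 = 1 by ring)
  simp only [smul_eq_mul] at hc
  rw [show (1 - 4*y/9) * (0:ℝ) + (4*y/9) * (9/4) = y by ring] at hc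
  rw [Real.exp_zero] at hc
  have h10 := exp_94_le
  calc Real.exp y ≤ (1 - 4*y/9) * 1 + 4*y/9 * Real.exp (9/4) := hc
    _ ≤ (1 - 4*y/9) * 1 + 4*y/9 * 10 := by nlinarith
    _ = 1 + 4*y := by ring

section FLemmas

variable {lam : ℝ} {f : ℕ → ℝ}

lemma summable_pf (hlam : 0 < lam) (hlip : ∀ n m : ℕ, |f n - f m| ≤ |(n:ℝ) - m|) :
    Summable (fun n => poissonP lam n * f n) := by
  refine Summable.of_norm_bounded (g := fun n => |f 0| * poissonP lam n + poissonP lam n * n)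
    ((((poissonP_summable lam).mul_left _)).add (summable_mul_nat lam hlam)) fun n => ?_
  have hp := poissonP_nonneg hlam.le n
  have h1 := hlip n 0
  simp only [Nat.cast_zero, sub_zero] at h1
  rw [Real.norm_eq_abs, abs_mul, abs_of_nonneg hp]
  have h2 : |f n| ≤ |f 0| + n := by
    have := abs_sub_abs_le_abs_sub (f n) (f 0)
    have h3 : |(n:ℝ)| = n := abs_of_nonneg (Nat.cast_nonneg n)
    nlinarith
  show poissonP lam n * |f n| ≤ |f 0| * poissonP lam n + poissonP lam n * n
  calc poissonP lam n * |f n| ≤ poissonP lam n * (|f 0| + n) := mul_le_mul_of_nonneg_left h2 hp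
    _ = |f 0| * poissonP lam n + poissonP lam n * n := by ring

lemma summable_p_absdev (hlam : 0 < lam) (hlip : ∀ n m : ℕ, |f n - f m| ≤ |(n:ℝ) - m|)
    (n : ℕ) : Summable (fun m => poissonP lam m * |f n - f m|) := by
  refine Summable.of_nonneg_of_le
    (fun m => mul_nonneg (poissonP_nonneg hlam.le m) (abs_nonneg _))
    (fun m => ?_)
    ((((poissonP_summable lam).mul_left (|(n:ℝ) - lam|))).add (summable_abs' lam hlam))
  have hp := poissonP_nonneg hlam.le m
  have h1 := hlip n m
  have h2 : |(n:ℝ) - m| ≤ |(n:ℝ) - lam| + |(m:ℝ) - lam| := by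
    calc |(n:ℝ) - m| = |((n:ℝ) - lam) - ((m:ℝ) - lam)| := by ring_nf
      _ ≤ |(n:ℝ) - lam| + |(m:ℝ) - lam| := abs_sub _ _
  nlinarith

lemma f_dev (hlam : 0 < lam) (hlip : ∀ n m : ℕ, |f n - f m| ≤ |(n:ℝ) - m|) (n : ℕ) :
    |f n - ∑' m : ℕ, poissonP lam m * f m| ≤ |(n:ℝ) - lam| + Real.sqrt lam := by
  have hpf := summable_pf hlam hlip
  have heq : f n - (∑' m : ℕ, poissonP lam m * f m)
      = ∑' m : ℕ, poissonP lam m * (f n - f m) := by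
    rw [tsum_congr (fun m => show poissonP lam m * (f n - f m)
        = poissonP lam m * f n - poissonP lam m * f m by ring),
      Summable.tsum_sub ((poissonP_summable lam).mul_right (f n)) hpf,
      tsum_mul_right, poissonP_tsum lam, one_mul]
  rw [heq]
  have hnorm : Summable (fun m => ‖poissonP lam m * (f n - f m)‖) := by
    refine (summable_p_absdev hlam hlip n).congr fun m => ?_
    rw [Real.norm_eq_abs, abs_mul, abs_of_nonneg (poissonP_nonneg hlam.le m)]
  calc |∑' m : ℕ, poissonP lam m * (f n - f m)|
      ≤ ∑' m : ℕ, ‖poissonP lam m * (f n - f m)‖ := norm_tsum_le_tsum_norm hnorm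
    _ = ∑' m : ℕ, poissonP lam m * |f n - f m| := by
        refine tsum_congr fun m => ?_
        rw [Real.norm_eq_abs, abs_mul, abs_of_nonneg (poissonP_nonneg hlam.le m)]
    _ ≤ ∑' m : ℕ, (|(n:ℝ) - lam| * poissonP lam m + poissonP lam m * |(m:ℝ) - lam|) := by
        refine Summable.tsum_le_tsum (fun m => ?_) (summable_p_absdev hlam hlip n)
          ((((poissonP_summable lam).mul_left (|(n:ℝ) - lam|))).add (summable_abs' lam hlam))
        have hp := poissonP_nonneg hlam.le m
        have h1 := hlip n m
        have h2 : |(n:ℝ) - m| ≤ |(n:ℝ) - lam| + |(m:ℝ) - lam| := by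
          calc |(n:ℝ) - m| = |((n:ℝ) - lam) - ((m:ℝ) - lam)| := by ring_nf
            _ ≤ |(n:ℝ) - lam| + |(m:ℝ) - lam| := abs_sub _ _
        nlinarith
    _ = |(n:ℝ) - lam| * (∑' m : ℕ, poissonP lam m)
        + ∑' m : ℕ, poissonP lam m * |(m:ℝ) - lam| := by
        rw [Summable.tsum_add (((poissonP_summable lam).mul_left (|(n:ℝ) - lam|)))
          (summable_abs' lam hlam), tsum_mul_left]
    _ ≤ |(n:ℝ) - lam| + Real.sqrt lam := by
        rw [poissonP_tsum lam, mul_one]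
        exact add_le_add_right (tsum_abs_le lam hlam) _

lemma summable_nat2 (hlam : 0 < lam) :
    Summable (fun n => poissonP lam n * (n:ℝ)^2) := by
  refine ((summable_mul_nat2 lam hlam).add (summable_mul_nat lam hlam)).congr fun n => ?_
  ring

lemma summable_dev_sq (hlam : 0 < lam) (hlip : ∀ n m : ℕ, |f n - f m| ≤ |(n:ℝ) - m|)
    (mu : ℝ) : Summable (fun n => poissonP lam n * (f n - mu)^2) := by
  refine Summable.of_nonneg_of_le
    (fun n => mul_nonneg (poissonP_nonneg hlam.le n) (sq_nonneg _)) (fun n => ?_)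
    (((poissonP_summable lam).mul_left (4*(f 0)^2 + 2*mu^2)).add
      ((summable_nat2 hlam).mul_left 4))
  have hp := poissonP_nonneg hlam.le n
  have h1 := hlip n 0
  simp only [Nat.cast_zero, sub_zero] at h1
  have h3 : |(n:ℝ)| = n := abs_of_nonneg (Nat.cast_nonneg n)
  have h2 : (f n - mu)^2 ≤ 4*(f 0)^2 + 2*mu^2 + 4*(n:ℝ)^2 := by
    have ha := abs_sub_abs_le_abs_sub (f n) (f 0)
    have hb : |f n| ≤ |f 0| + n := by rw [h3] at h1; nlinarith
    have hb2 : (f n)^2 ≤ (|f 0| + (n:ℝ))^2 := by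
      have h4 := mul_self_le_mul_self (abs_nonneg (f n)) hb
      nlinarith [sq_abs (f n)]
    nlinarith [sq_nonneg (f n + mu), sq_nonneg (|f 0| - (n:ℝ)), sq_abs (f 0)]
  calc poissonP lam n * (f n - mu)^2
      ≤ poissonP lam n * (4*(f 0)^2 + 2*mu^2 + 4*(n:ℝ)^2) := mul_le_mul_of_nonneg_left h2 hp
    _ = (4*(f 0)^2 + 2*mu^2) * poissonP lam n + 4 * (poissonP lam n * (n:ℝ)^2) := by ring

lemma summable_pdev (hlam : 0 < lam) (hlip : ∀ n m : ℕ, |f n - f m| ≤ |(n:ℝ) - m|)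
    (mu : ℝ) : Summable (fun n => poissonP lam n * (f n - mu)) := by
  refine ((summable_pf hlam hlip).sub ((poissonP_summable lam).mul_left mu)).congr fun n => ?_
  ring

lemma tsum_pdev_zero (hlam : 0 < lam) (hlip : ∀ n m : ℕ, |f n - f m| ≤ |(n:ℝ) - m|) :
    (∑' n : ℕ, poissonP lam n * (f n - ∑' m : ℕ, poissonP lam m * f m)) = 0 := by
  rw [tsum_congr (fun n => show poissonP lam n * (f n - ∑' m : ℕ, poissonP lam m * f m)
      = poissonP lam n * f n - (∑' m : ℕ, poissonP lam m * f m) * poissonP lam n by ring),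
    Summable.tsum_sub (summable_pf hlam hlip)
      ((poissonP_summable lam).mul_left _), tsum_mul_left, poissonP_tsum lam]
  ring

lemma tsum_dev_sq_le (hlam : 0 < lam) (hlip : ∀ n m : ℕ, |f n - f m| ≤ |(n:ℝ) - m|) :
    (∑' n : ℕ, poissonP lam n * (f n - ∑' m : ℕ, poissonP lam m * f m)^2) ≤ 4 * lam := by
  set mu := ∑' m : ℕ, poissonP lam m * f m with hmu
  have hs : 0 ≤ Real.sqrt lam := Real.sqrt_nonneg lam
  have hsq : Real.sqrt lam * Real.sqrt lam = lam := Real.mul_self_sqrt hlam.le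
  have hRs : Summable (fun n => (poissonP lam n * ((n:ℝ) - lam)^2 + lam * poissonP lam n)
      + (2*Real.sqrt lam) * (poissonP lam n * |(n:ℝ) - lam|)) :=
    ((summable_sq lam hlam).add ((poissonP_summable lam).mul_left lam)).add
      ((summable_abs' lam hlam).mul_left _)
  have hpt : ∀ n : ℕ, poissonP lam n * (f n - mu)^2
      ≤ (poissonP lam n * ((n:ℝ) - lam)^2 + lam * poissonP lam n)
        + (2*Real.sqrt lam) * (poissonP lam n * |(n:ℝ) - lam|) := by
    intro n
    have hp := poissonP_nonneg hlam.le n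
    have hd := f_dev hlam hlip n
    rw [← hmu] at hd
    have habs := abs_nonneg (f n - mu)
    have h2 : (f n - mu)^2 ≤ ((n:ℝ) - lam)^2 + 2*Real.sqrt lam * |(n:ℝ) - lam| + lam := by
      nlinarith [sq_abs (f n - mu), sq_abs ((n:ℝ) - lam), abs_nonneg ((n:ℝ) - lam)]
    nlinarith
  refine (Summable.tsum_le_tsum hpt (summable_dev_sq hlam hlip mu) hRs).trans ?_
  rw [Summable.tsum_add (((summable_sq lam hlam).add ((poissonP_summable lam).mul_left lam)))
      ((summable_abs' lam hlam).mul_left _),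
    Summable.tsum_add (summable_sq lam hlam) ((poissonP_summable lam).mul_left lam),
    tsum_mul_left, tsum_mul_left, tsum_sq lam hlam, poissonP_tsum lam]
  have := tsum_abs_le lam hlam
  nlinarith

lemma cantelli (hlam : 0 < lam) (hlip : ∀ n m : ℕ, |f n - f m| ≤ |(n:ℝ) - m|)
    {t c : ℝ} (ht : 0 < t) (hc : 0 < c) :
    (∑' n : ℕ, ({n : ℕ | t < f n - ∑' m : ℕ, poissonP lam m * f m}.indicator
      (poissonP lam)) n) ≤ (4*lam + c^2) / (t+c)^2 := by
  set mu := ∑' m : ℕ, poissonP lam m * f m with hmu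
  have htc : (0:ℝ) < (t+c)^2 := by positivity
  have hsumc : Summable (fun n => poissonP lam n * (f n - mu + c)^2) := by
    refine ((summable_dev_sq hlam hlip mu).add
      (((summable_pdev hlam hlip mu).mul_left (2*c)).add
        ((poissonP_summable lam).mul_left (c^2)))).congr fun n => ?_
    ring
  have hpt : ∀ n : ℕ, ({n : ℕ | t < f n - mu}.indicator (poissonP lam)) n
      ≤ (poissonP lam n * (f n - mu + c)^2) * ((t+c)^2)⁻¹ := by
    intro n
    have key : (poissonP lam n * (f n - mu + c)^2) * ((t+c)^2)⁻¹
        = poissonP lam n * ((f n - mu + c)^2 * ((t+c)^2)⁻¹) := by ring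
    rw [key]
    refine indicator_le_exp hlam (fun hn => ?_) (by positivity)
    have h1 : t < f n - mu := hn
    have h2 : t + c ≤ f n - mu + c := by linarith
    have : 1 ≤ ((f n - mu + c)/(t+c))^2 := by
      have : (1:ℝ) ≤ (f n - mu + c)/(t+c) := by
        rw [le_div_iff₀ (by linarith : (0:ℝ) < t + c)]
        linarith
      nlinarith
    calc (1:ℝ) ≤ ((f n - mu + c)/(t+c))^2 := this
      _ = (f n - mu + c)^2 * ((t+c)^2)⁻¹ := by rw [div_pow]; ring
  refine (Summable.tsum_le_tsum hpt (summable_indicator hlam _) (hsumc.mul_right _)).trans ?_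
  rw [tsum_mul_right]
  have hinner : (∑' n : ℕ, poissonP lam n * (f n - mu + c)^2) ≤ 4*lam + c^2 := by
    have hexp : (∑' n : ℕ, poissonP lam n * (f n - mu + c)^2)
        = (∑' n : ℕ, poissonP lam n * (f n - mu)^2)
          + ((2*c) * (∑' n : ℕ, poissonP lam n * (f n - mu))
            + c^2 * (∑' n : ℕ, poissonP lam n)) := by
      rw [← tsum_mul_left, ← tsum_mul_left,
        ← Summable.tsum_add ((summable_pdev hlam hlip mu).mul_left (2*c))
          ((poissonP_summable lam).mul_left (c^2)),
        ← Summable.tsum_add (summable_dev_sq hlam hlip mu)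
          (((summable_pdev hlam hlip mu).mul_left (2*c)).add
            ((poissonP_summable lam).mul_left (c^2)))]
      exact tsum_congr fun n => by ring
    rw [hexp, tsum_pdev_zero hlam hlip, poissonP_tsum lam]
    have := tsum_dev_sq_le hlam hlip
    linarith
  rw [div_eq_mul_inv]
  exact mul_le_mul_of_nonneg_right hinner (by positivity)

end FLemmas

lemma exp_quad_bound (x : ℝ) (hx : |x| ≤ 1) : Real.exp x ≤ 1 + x + (3/4)*x^2 := by
  have hb := Real.exp_bound hx (n := 2) (by norm_num)
  have hsum : (∑ i ∈ Finset.range 2, x^i/(i.factorial : ℝ)) = 1 + x := by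
    norm_num [Finset.sum_range_succ]
  rw [hsum] at hb
  norm_num at hb
  have := abs_le.mp hb
  nlinarith [sq_abs x]

lemma numIIa (lam t u : ℝ) (hlam : 0 < lam) (ht : 0 < t) (hupos : 0 < u)
    (hu56 : 5/6*t ≤ u) (hut : u ≤ t) (hcase : lam ≤ u) :
    lam * (Real.exp (1/2) - 1) - (1/2) * (lam + u) ≤ -(t^2)/(16*lam+3*t) := by
  have hden : (0:ℝ) < 16 * lam + 3 * t := by linarith
  have hexph := exp_half_le
  have h1 : t^2/(16*lam+3*t) ≤ u/2 - 5*lam/32 := by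
    rw [div_le_iff₀ hden]
    nlinarith [mul_nonneg (sub_nonneg.2 hcase) hupos.le,
      mul_nonneg (sub_nonneg.2 hut) hupos.le,
      mul_nonneg (sub_nonneg.2 hu56) ht.le,
      mul_nonneg (sub_nonneg.2 hcase) hlam.le,
      mul_nonneg (sub_nonneg.2 hut) hlam.le]
  have h2 : -(t ^ 2) / (16 * lam + 3 * t) = -(t^2/(16*lam+3*t)) := by ring
  rw [h2]
  nlinarith

lemma numIIb_A (lam u : ℝ) (hlam : 0 < lam) (hupos : 0 < u) (hcase : u < lam) :
    lam * (Real.exp (u/(2*lam)) - 1) - (u/(2*lam)) * (lam + u) ≤ -((5/16)*u^2/lam) := by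
  set s := u/(2*lam) with hs
  have hs_pos : 0 < s := by rw [hs]; positivity
  have hs_le1 : |s| ≤ 1 := by
    rw [abs_of_nonneg hs_pos.le, hs, div_le_iff₀ (by linarith)]; linarith
  have h1 := exp_quad_bound s hs_le1
  have h2 : s^2 = u^2/(4*lam^2) := by rw [hs]; field_simp; ring
  have h3 : s * u = u^2/(2*lam) := by rw [hs]; field_simp
  have key : lam * (Real.exp s - 1) - s * (lam + u)
      = lam * (Real.exp s - 1 - s) - s * u := by ring
  rw [key, h3]
  have h4' : Real.exp s - 1 - s ≤ (3/4) * s^2 := by linarith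
  have h4 : lam * (Real.exp s - 1 - s) ≤ (3/4) * lam * s^2 :=
    le_trans (mul_le_mul_of_nonneg_left h4' hlam.le) (le_of_eq (by ring))
  rw [h2] at h4
  have e1 : (3/4) * lam * (u^2/(4*lam^2)) = (3/16) * u^2/lam := by field_simp; ring
  rw [e1] at h4
  have hend : (3/16) * u^2/lam - u^2/(2*lam) = -((5/16) * u^2/lam) := by
    field_simp; ring
  linarith

lemma numIIb_B (lam u : ℝ) (hlam : 0 < lam) (hupos : 0 < u) (hcase : u < lam) :
    lam * (Real.exp (-(u/(2*lam))) - 1) + (u/(2*lam)) * (lam - u) ≤ -((5/16)*u^2/lam) := by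
  set s := u/(2*lam) with hs
  have hs_pos : 0 < s := by rw [hs]; positivity
  have hs_le1 : |(-s)| ≤ 1 := by
    rw [abs_neg, abs_of_nonneg hs_pos.le, hs, div_le_iff₀ (by linarith)]; linarith
  have h1 := exp_quad_bound (-s) hs_le1
  have h2 : s^2 = u^2/(4*lam^2) := by rw [hs]; field_simp; ring
  have h3 : s * u = u^2/(2*lam) := by rw [hs]; field_simp
  have key : lam * (Real.exp (-s) - 1) + s * (lam - u)
      = lam * (Real.exp (-s) - 1 + s) - s * u := by ring
  rw [key, h3]
  have h4' : Real.exp (-s) - 1 + s ≤ (3/4) * s^2 := by nlinarith [sq_nonneg s]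
  have h4 : lam * (Real.exp (-s) - 1 + s) ≤ (3/4) * lam * s^2 :=
    le_trans (mul_le_mul_of_nonneg_left h4' hlam.le) (le_of_eq (by ring))
  rw [h2] at h4
  have e1 : (3/4) * lam * (u^2/(4*lam^2)) = (3/16) * u^2/lam := by field_simp; ring
  rw [e1] at h4
  have hend : (3/16) * u^2/lam - u^2/(2*lam) = -((5/16) * u^2/lam) := by
    field_simp; ring
  linarith

lemma numIIb_gap (lam t u : ℝ) (hlam : 0 < lam) (ht : 0 < t) (hupos : 0 < u)
    (hu56 : 5/6*t ≤ u) (hul : 25 * lam ≤ u^2) :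
    t^2/(16*lam+3*t) + 1 ≤ (5/16) * u^2/lam := by
  have hden : (0:ℝ) < 16 * lam + 3 * t := by linarith
  have hb1 : t^2/(16*lam+3*t) ≤ (9/100)*u^2/lam := by
    rw [div_le_iff₀ hden, div_mul_eq_mul_div, le_div_iff₀ hlam]
    nlinarith [mul_pos hupos hupos, mul_nonneg (sub_nonneg.2 hul) ht.le,
      mul_nonneg (sub_nonneg.2 hu56) ht.le, mul_nonneg (sub_nonneg.2 hu56) hupos.le,
      mul_nonneg (sub_nonneg.2 hul) hlam.le]
  have hb2 : (89/400) * u^2/lam ≥ 89/16 := by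
    rw [ge_iff_le, le_div_iff₀ hlam]
    nlinarith
  have hsplit2 : (5/16) * u^2/lam = (9/100)*u^2/lam + (89/400)*u^2/lam := by
    field_simp; ring
  linarith

lemma two_exp_le (X B : ℝ) (h : B + 1 ≤ X) :
    Real.exp (-X) + Real.exp (-X) ≤ Real.exp (-B) := by
  have e1 : (2:ℝ) ≤ Real.exp (X - B) := by
    have := Real.exp_one_gt_d9
    refine le_trans (by linarith) (Real.exp_le_exp.mpr (by linarith))
  have e2 : Real.exp (-B) = Real.exp (X - B) * Real.exp (-X) := by
    rw [← Real.exp_add]; ring_nf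
  nlinarith [Real.exp_pos (-X)]

/-- Poisson concentration of Lipschitz functions, a variant of
Bobkov–Ledoux: if `W ~ Poisson(λ)` and `f : ℕ → ℝ` is 1-Lipschitz, then for every
`t > 0`, `P[f(W) - E[f(W)] > t] ≤ exp(-t²/(16λ + 3t))`. -/
theorem poisson_lipschitz_concentration (lam : ℝ) (hlam : 0 < lam)
    (f : ℕ → ℝ) (hf : ∀ w : ℕ, |f (w + 1) - f w| ≤ 1) (t : ℝ) (ht : 0 < t) :
    (∑' n : ℕ, {n : ℕ | t < f n - ∑' m : ℕ, poissonP lam m * f m}.indicator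
        (poissonP lam) n) ≤
      Real.exp (-(t ^ 2) / (16 * lam + 3 * t)) := by
  have hlip := lip_bound f hf
  set mu := ∑' m : ℕ, poissonP lam m * f m with hmu
  have hden : (0:ℝ) < 16 * lam + 3 * t := by linarith
  by_cases h36 : t^2 ≤ 36 * lam
  · -- Cantelli regime
    have hc : (0:ℝ) < 4*lam/t := by positivity
    have hS := cantelli hlam hlip ht hc
    have halg : (4*lam + (4*lam/t)^2)/(t + 4*lam/t)^2 = 4*lam/(t^2 + 4*lam) := by
      field_simp
    rw [halg] at hS
    refine hS.trans ?_
    have hy0 : (0:ℝ) ≤ t^2/(16*lam) := by positivity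
    have hy1 : t^2/(16*lam) ≤ 9/4 := by
      rw [div_le_iff₀ (by linarith)]
      linarith
    have hchord := chord_exp hy0 hy1
    have hmono : Real.exp (t^2/(16*lam + 3*t)) ≤ Real.exp (t^2/(16*lam)) := by
      apply Real.exp_le_exp.mpr
      apply div_le_div_of_nonneg_left (by positivity) (by linarith) (by linarith)
    have h1 : Real.exp (t^2/(16*lam + 3*t)) ≤ (t^2 + 4*lam)/(4*lam) := by
      refine hmono.trans (hchord.trans (le_of_eq ?_))
      field_simp
      ring
    have hrw : -(t ^ 2) / (16 * lam + 3 * t) = -(t^2/(16*lam+3*t)) := by ring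
    rw [hrw, Real.exp_neg]
    rw [show 4*lam/(t^2 + 4*lam) = ((t^2 + 4*lam)/(4*lam))⁻¹ by rw [inv_div]]
    exact inv_anti₀ (Real.exp_pos _) h1
  · -- Chernoff regime
    push_neg at h36
    set u := t - Real.sqrt lam with hu
    clear_value u
    have hsl : Real.sqrt lam < t/6 := by
      rw [show t/6 = t/6 from rfl]
      have : lam < (t/6)^2 := by nlinarith
      nlinarith [Real.sq_sqrt hlam.le, Real.sqrt_nonneg lam,
        abs_of_nonneg (Real.sqrt_nonneg lam)]
    have hsqrt_pos : 0 ≤ Real.sqrt lam := Real.sqrt_nonneg lam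
    have hu56 : 5/6*t ≤ u := by simp only [hu]; linarith
    have hupos : 0 < u := by linarith
    have hut : u ≤ t := by simp only [hu]; linarith
    have hlam_u2 : lam < u^2/25 := by
      nlinarith [Real.sq_sqrt hlam.le]
    -- event inclusion
    set A : Set ℕ := {n : ℕ | lam + u < (n:ℝ)} with hA
    set B : Set ℕ := {n : ℕ | (n:ℝ) < lam - u} with hB
    have hsplit : ∀ n : ℕ, ({n : ℕ | t < f n - mu}.indicator (poissonP lam)) n
        ≤ (A.indicator (poissonP lam)) n + (B.indicator (poissonP lam)) n := by
      intro n
      have hBnn : 0 ≤ (B.indicator (poissonP lam)) n :=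
        Set.indicator_nonneg (fun m _ => poissonP_nonneg hlam.le m) n
      have hAnn : 0 ≤ (A.indicator (poissonP lam)) n :=
        Set.indicator_nonneg (fun m _ => poissonP_nonneg hlam.le m) n
      by_cases hn : n ∈ {n : ℕ | t < f n - mu}
      · have ht' : t < f n - mu := hn
        have hd := f_dev hlam hlip n
        rw [← hmu] at hd
        have habs : u < |(n:ℝ) - lam| := by
          have : f n - mu ≤ |f n - mu| := le_abs_self _
          simp only [hu]
          linarith
        rw [Set.indicator_of_mem hn]
        rcases abs_cases ((n:ℝ) - lam) with ⟨he, _⟩ | ⟨he, _⟩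
        · have hmem : n ∈ A := by
            simp only [hA, Set.mem_setOf_eq]; rw [he] at habs; linarith
          rw [Set.indicator_of_mem hmem]
          linarith
        · have hmem : n ∈ B := by
            simp only [hB, Set.mem_setOf_eq]; rw [he] at habs; linarith
          rw [Set.indicator_of_mem hmem]
          linarith
      · rw [Set.indicator_of_notMem hn]
        linarith
    have hSsum := Summable.tsum_le_tsum hsplit (summable_indicator hlam _)
      ((summable_indicator hlam A).add (summable_indicator hlam B))
    rw [Summable.tsum_add (summable_indicator hlam A) (summable_indicator hlam B)] at hSsum
    refine hSsum.trans ?_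
    by_cases hcase : lam ≤ u
    · -- IIa : only upper tail
      have hBzero : (∑' n : ℕ, (B.indicator (poissonP lam)) n) = 0 := by
        have : ∀ n : ℕ, (B.indicator (poissonP lam)) n = 0 := by
          intro n
          apply Set.indicator_of_notMem
          simp only [hB, Set.mem_setOf_eq, not_lt]
          have : (0:ℝ) ≤ n := Nat.cast_nonneg n
          linarith
        simp [this]
      rw [hBzero, add_zero]
      have hchern := chernoff_upper lam hlam (lam + u) (1/2) (by norm_num)
      refine hchern.trans (Real.exp_le_exp.mpr ?_)
      exact numIIa lam t u hlam ht hupos hu56 hut hcase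
    · -- IIb : two-sided, small s
      push_neg at hcase
      have hul : 25 * lam ≤ u^2 := by nlinarith
      set s := u/(2*lam) with hs
      have hs_pos : 0 < s := by rw [hs]; positivity
      have hA_bound := chernoff_upper lam hlam (lam + u) s hs_pos.le
      have hB_bound := chernoff_lower lam hlam (lam - u) s hs_pos.le
      have hEA := numIIb_A lam u hlam hupos hcase
      have hEB := numIIb_B lam u hlam hupos hcase
      rw [← hs] at hEA hEB
      have hgap := numIIb_gap lam t u hlam ht hupos hu56 hul
      have hfin := two_exp_le ((5/16) * u^2/lam) (t^2/(16*lam+3*t)) (by linarith)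
      have hrw : -(t ^ 2) / (16 * lam + 3 * t) = -(t^2/(16*lam+3*t)) := by ring
      rw [hrw]
      refine le_trans (add_le_add
        (hA_bound.trans (Real.exp_le_exp.mpr hEA))
        (hB_bound.trans (Real.exp_le_exp.mpr hEB))) hfin
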